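/- Let f : ℝ^d → ℝ be ℓ-smooth, θ_{t+1} = θ_t − η ĝ_t with ‖ĝ_t‖ = 1, and suppose ‖ĝ_t − ∇f(θ_t)/‖∇f(θ_t)‖‖ ≤ 1/2 (where ∇f(θ_t) ≠ 0). Then f(θ_{t+1}) − f(θ_t) ≤ −(η/2)‖∇f(θ_t)‖ + (ℓη²)/2. -/

import Mathlib

/-!
By the descent lemma, a step `-η ĝ` changes `f` by at most `-η ⟪∇f(θ), ĝ⟫ + ℓη²/2`. Since `ĝ` and
`∇f(θ)/‖∇f(θ)‖` are unit vectors at distance at most `1/2`, their inner product is at least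
`1 - (1/2)²/2 = 7/8 ≥ 1/2`, so `⟪∇f(θ), ĝ⟫ ≥ ‖∇f(θ)‖/2`.
-/

open scoped RealInnerProductSpace

section

variable {E : Type*} [NormedAddCommGroup E] [InnerProductSpace ℝ E]

theorem one_sub_sq_div_two_mul_norm_le_inner {G g : E} {ε : ℝ} (hg : ‖g‖ = 1)
    (happrox : ‖g - ‖G‖⁻¹ • G‖ ≤ ε) :
    (1 - ε ^ 2 / 2) * ‖G‖ ≤ ⟪G, g⟫ := by
  rcases eq_or_ne G 0 with rfl | hG
  · simp
  set u := ‖G‖⁻¹ • G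
  have hu : ‖u‖ = 1 := norm_smul_inv_norm hG
  have hGu : ⟪G, g⟫ = ‖G‖ * ⟪g, u⟫ := by
    rw [real_inner_comm, real_inner_smul_right, mul_inv_cancel_left₀ (norm_ne_zero_iff.2 hG)]
  have hgu : ‖g - u‖ ^ 2 = 2 - 2 * ⟪g, u⟫ := by
    rw [norm_sub_sq_real, hg, hu]; ring
  have hε : ‖g - u‖ ^ 2 ≤ ε ^ 2 := pow_le_pow_left₀ (norm_nonneg _) happrox 2
  rw [hGu]
  nlinarith [norm_nonneg G]

variable [CompleteSpace E] {f : E → ℝ}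

theorem HasGradientAt.hasDerivAt_comp_add_smul {f' x v : E} {t : ℝ}
    (hf : HasGradientAt f f' (x + t • v)) :
    HasDerivAt (fun s : ℝ => f (x + s • v)) ⟪f', v⟫ t := by
  have hline : HasDerivAt (fun s : ℝ => x + s • v) v t := by
    simpa using ((hasDerivAt_id t).smul_const v).const_add x
  simpa [Function.comp_def] using hf.hasFDerivAt.comp_hasDerivAt t hline

theorem apply_add_le_of_lipschitz_gradient {ℓ : ℝ} (hf : Differentiable ℝ f)
    (hlip : ∀ x y, ‖gradient f x - gradient f y‖ ≤ ℓ * ‖x - y‖) (x v : E) :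
    f (x + v) ≤ f x + ⟪gradient f x, v⟫ + ℓ / 2 * ‖v‖ ^ 2 := by
  -- The claim is `φ 1 ≤ φ 0`; Cauchy–Schwarz and the Lipschitz bound give `φ' ≤ 0` on `t ≥ 0`.
  set φ : ℝ → ℝ := fun t => f (x + t • v) - t * ⟪gradient f x, v⟫ - ℓ / 2 * t ^ 2 * ‖v‖ ^ 2
  set φ' : ℝ → ℝ :=
    fun t => ⟪gradient f (x + t • v), v⟫ - ⟪gradient f x, v⟫ - ℓ * t * ‖v‖ ^ 2
  have hderiv (t : ℝ) : HasDerivAt φ (φ' t) t := by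
    have := (((hf (x + t • v)).hasGradientAt.hasDerivAt_comp_add_smul).sub
      ((hasDerivAt_id t).mul_const ⟪gradient f x, v⟫)).sub
      (((hasDerivAt_pow 2 t).const_mul (ℓ / 2)).mul_const (‖v‖ ^ 2))
    refine this.congr_deriv ?_
    simp only [φ']
    ring
  have hφ'_nonpos {t : ℝ} (ht : 0 ≤ t) : φ' t ≤ 0 := by
    have hnorm : ‖gradient f (x + t • v) - gradient f x‖ ≤ ℓ * (t * ‖v‖) := by
      simpa [norm_smul, abs_of_nonneg ht] using hlip (x + t • v) x
    have hcs := real_inner_le_norm (gradient f (x + t • v) - gradient f x) v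
    rw [inner_sub_left] at hcs
    nlinarith [norm_nonneg v]
  have hanti : AntitoneOn φ (Set.Ici 0) :=
    antitoneOn_of_hasDerivWithinAt_nonpos (convex_Ici 0)
      (fun t _ => (hderiv t).continuousAt.continuousWithinAt)
      (fun t _ => (hderiv t).hasDerivWithinAt)
      (fun t ht => hφ'_nonpos (by simpa using (interior_subset ht : t ∈ Set.Ici (0 : ℝ))))
  have hφ := hanti Set.self_mem_Ici (Set.mem_Ici.2 zero_le_one) zero_le_one
  simp only [φ, one_smul, zero_smul, add_zero] at hφ
  linarith

end

theorem stmt5_general {d : ℕ} (f : EuclideanSpace ℝ (Fin d) → ℝ) (ℓ η : ℝ)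
    (hdiff : Differentiable ℝ f)
    (hlip : ∀ x y, ‖gradient f x - gradient f y‖ ≤ ℓ * ‖x - y‖)
    (hη : 0 < η)
    (θ θ' g : EuclideanSpace ℝ (Fin d))
    (hg : ‖g‖ = 1)
    (happrox : ‖g - ‖gradient f θ‖⁻¹ • gradient f θ‖ ≤ 1 / 2)
    (hupd : θ' = θ - η • g) :
    f θ' - f θ ≤ -(η / 2) * ‖gradient f θ‖ + ℓ * η ^ 2 / 2 := by
  have hdescent := apply_add_le_of_lipschitz_gradient hdiff hlip θ (-(η • g))
  have hstep : ‖-(η • g)‖ = η := by rw [norm_neg, norm_smul, hg, Real.norm_of_nonneg hη.le, mul_one]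
  rw [← sub_eq_add_neg, ← hupd, inner_neg_right, real_inner_smul_right, hstep] at hdescent
  have halign := one_sub_sq_div_two_mul_norm_le_inner hg happrox
  nlinarith [norm_nonneg (gradient f θ)]

/-- one-step descent.  If `f` is ℓ-smooth, `θ' = θ − η ĝ` with `‖ĝ‖ = 1`
and `‖ĝ − ∇f(θ)/‖∇f(θ)‖‖ ≤ 1/2` (with `∇f(θ) ≠ 0`), then
`f θ' − f θ ≤ −(η/2)‖∇f(θ)‖ + ℓη²/2`. -/
theorem stmt5 {d : ℕ} (f : EuclideanSpace ℝ (Fin d) → ℝ) (ℓ η : ℝ)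
    (hdiff : Differentiable ℝ f)
    (hlip : ∀ x y, ‖gradient f x - gradient f y‖ ≤ ℓ * ‖x - y‖)
    (hη : 0 < η)
    (θ θ' g : EuclideanSpace ℝ (Fin d))
    (hg : ‖g‖ = 1)
    (hgrad : gradient f θ ≠ 0)
    (happrox : ‖g - ‖gradient f θ‖⁻¹ • gradient f θ‖ ≤ 1 / 2)
    (hupd : θ' = θ - η • g) :
    f θ' - f θ ≤ -(η / 2) * ‖gradient f θ‖ + ℓ * η ^ 2 / 2 :=
  stmt5_general f ℓ η hdiff hlip hη θ θ' g hg happrox hupd
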